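/- arXiv:1805.04832 — 3 statements merged into one kernel-verified Lean document; each statement's English description precedes it below -/
import Mathlib

section
/- Let n ≥ 1 be an integer, M ≥ 3n^3, and x = M/n + n. Then n - 1/2 < M/x < n, hence ⌊M/x + 1/2⌋ = n. -/
/-- Right-endpoint case of the rounding lemma: with `M ≥ 3n³` and `x = M/n + n`,
we have `n - 1/2 < M/x < n`, hence `⌊M/x + 1/2⌋ = n`. -/
theorem stmt_2 (n : ℕ) (hn : 1 ≤ n) (M x : ℝ)
    (hM : 3 * (n : ℝ) ^ 3 ≤ M) (hx : x = M / n + n) :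
    (n : ℝ) - 1 / 2 < M / x ∧ M / x < n ∧ ⌊M / x + 1 / 2⌋ = n := by
  have hn' : (1 : ℝ) ≤ n := by exact_mod_cast hn
  have npos : (0 : ℝ) < n := by linarith
  have hMpos : (0 : ℝ) < M := by nlinarith [pow_pos npos 3]
  have hxe : x * n = M + n ^ 2 := by
    rw [hx]; field_simp
  have xpos : 0 < x := by nlinarith
  have h2 : M / x < n := by
    rw [div_lt_iff₀ xpos]; nlinarith
  have h1 : (n : ℝ) - 1 / 2 < M / x := by
    rw [lt_div_iff₀ xpos]; nlinarith
  refine ⟨h1, h2, ?_⟩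
  rw [Int.floor_eq_iff]
  push_cast
  constructor <;> linarith
end

section
/- The sum Σ_{k=1}^{n-1} n^2/(k(n-k)) is less than 4n·ln(n) for all integers n ≥ 2. -/
/-- Epidemic expected-time bound: `Σ_{k=1}^{n-1} n²/(k(n-k)) < 4n·ln n` for `n ≥ 2`. -/
theorem stmt_8 (n : ℕ) (hn : 2 ≤ n) :
    ∑ k ∈ Finset.Ico 1 n, (n : ℝ) ^ 2 / (k * ((n : ℝ) - k)) < 4 * n * Real.log n := by
  have hn0 : (0:ℝ) < n := by positivity
  have key : ∑ k ∈ Finset.Ico 1 n, (n : ℝ) ^ 2 / (k * ((n : ℝ) - k))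
      = 2 * n * ∑ k ∈ Finset.Ico 1 n, (1:ℝ) / k := by
    have h1 : ∀ k ∈ Finset.Ico 1 n,
        (n : ℝ) ^ 2 / (k * ((n : ℝ) - k)) = n / k + n / ((n : ℝ) - k) := by
      intro k hk
      obtain ⟨hk1, hk2⟩ := Finset.mem_Ico.mp hk
      have hk0 : (0:ℝ) < k := by exact_mod_cast hk1
      have hkn : (k:ℝ) < n := by exact_mod_cast hk2
      have hne1 : (k:ℝ) ≠ 0 := ne_of_gt hk0
      have hne2 : (n:ℝ) - k ≠ 0 := sub_ne_zero.mpr (ne_of_lt hkn).symm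
      field_simp
      ring
    rw [Finset.sum_congr rfl h1, Finset.sum_add_distrib]
    have h2 : ∑ k ∈ Finset.Ico 1 n, (n:ℝ) / ((n : ℝ) - k)
        = ∑ k ∈ Finset.Ico 1 n, (n:ℝ) / k := by
      refine Finset.sum_nbij' (fun k => n - k) (fun k => n - k) ?_ ?_ ?_ ?_ ?_
      · intro a ha
        simp only [Finset.mem_Ico] at ha ⊢
        omega
      · intro a ha
        simp only [Finset.mem_Ico] at ha ⊢
        omega
      · intro a ha
        simp only [Finset.mem_Ico] at ha ⊢
        omega
      · intro a ha
        simp only [Finset.mem_Ico] at ha ⊢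
        omega
      · intro a ha
        obtain ⟨h1a, h2a⟩ := Finset.mem_Ico.mp ha
        have : ((n - a : ℕ) : ℝ) = (n:ℝ) - a := by
          push_cast [Nat.cast_sub h2a.le]
          ring
        rw [this]
    rw [h2, Finset.mul_sum, ← Finset.sum_add_distrib]
    refine Finset.sum_congr rfl fun k hk => ?_
    obtain ⟨hk1, hk2⟩ := Finset.mem_Ico.mp hk
    have hk0 : (0:ℝ) < k := by exact_mod_cast hk1
    field_simp
    ring
  rw [key]
  have hIco : Finset.Ico 1 n = Finset.Icc 1 (n - 1) := by
    ext k
    simp only [Finset.mem_Ico, Finset.mem_Icc]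
    omega
  have hsum : ∑ k ∈ Finset.Ico 1 n, (1:ℝ) / k = ((harmonic (n-1) : ℚ) : ℝ) := by
    rw [hIco, harmonic_eq_sum_Icc]
    push_cast
    simp [one_div]
  rw [hsum]
  have hb : ((harmonic (n-1) : ℚ) : ℝ) ≤ 1 + Real.log (n-1 : ℕ) := harmonic_le_one_add_log _
  rcases eq_or_lt_of_le hn with heq | h3
  · -- n = 2
    subst heq
    have h2 : Real.log 2 > 0.6931471803 := Real.log_two_gt_d9
    norm_num [harmonic]
    nlinarith [h2]
  · have h3n : 3 ≤ n := h3
    have hlog3 : (1:ℝ) < Real.log n := by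
      rw [Real.lt_log_iff_exp_lt hn0]
      calc Real.exp 1 < 2.7182818286 := Real.exp_one_lt_d9
        _ ≤ 3 := by norm_num
        _ ≤ n := by exact_mod_cast h3n
    have hlogmono : Real.log ((n-1 : ℕ) : ℝ) ≤ Real.log n := by
      apply Real.log_le_log (by exact_mod_cast (by omega : 0 < n - 1))
      have : ((n-1:ℕ):ℝ) ≤ n := by
        push_cast [Nat.cast_sub (by omega : 1 ≤ n)]
        linarith
      exact this
    calc 2 * (n:ℝ) * ((harmonic (n-1) : ℚ) : ℝ)
        ≤ 2 * n * (1 + Real.log (n-1:ℕ)) := by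
          apply mul_le_mul_of_nonneg_left hb (by positivity)
      _ < 2 * n * (2 * Real.log n) := by
          apply mul_lt_mul_of_pos_left _ (by positivity)
          linarith
      _ = 4 * n * Real.log n := by ring
end

section
/- Define Φ on a multiset of integers {a_1,...,a_n} with fixed target μ = M/n by Φ = Σ_i |a_i - μ|. Replacing two entries a, b by ⌈(a+b)/2⌉ and ⌊(a+b)/2⌋ never increases Φ: |⌈(a+b)/2⌉ - μ| + |⌊(a+b)/2⌋ - μ| ≤ |a - μ| + |b - μ|. -/
lemma aux15 (x y A B μ : ℝ) (h1 : x + y = A + B) (h2 : |x - y| ≤ |A - B|) :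
    |x - μ| + |y - μ| ≤ |A - μ| + |B - μ| := by
  rcases abs_cases (x - y) with ⟨e1, _⟩ | ⟨e1, _⟩ <;>
  rcases abs_cases (A - B) with ⟨e2, _⟩ | ⟨e2, _⟩ <;>
  rcases abs_cases (x - μ) with ⟨e3, f3⟩ | ⟨e3, f3⟩ <;>
  rcases abs_cases (y - μ) with ⟨e4, f4⟩ | ⟨e4, f4⟩ <;>
  rcases abs_cases (A - μ) with ⟨e5, f5⟩ | ⟨e5, f5⟩ <;>
  rcases abs_cases (B - μ) with ⟨e6, f6⟩ | ⟨e6, f6⟩ <;>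
  linarith

/-- Monotonicity of the potential `Φ = Σ|a_i - μ|` under averaging: replacing two
entries `a, b` by `⌈(a+b)/2⌉` and `⌊(a+b)/2⌋` never increases the total distance
to the target `μ`. -/
theorem stmt_15 (a b : ℤ) (μ : ℝ) :
    |(⌈((a : ℚ) + b) / 2⌉ : ℝ) - μ| + |(⌊((a : ℚ) + b) / 2⌋ : ℝ) - μ|
      ≤ |(a : ℝ) - μ| + |(b : ℝ) - μ| := by
  have hq : ((a : ℚ) + b) = ((a + b : ℤ) : ℚ) := by push_cast; ring
  have hfloor : ⌊((a : ℚ) + b) / 2⌋ = (a + b) / 2 := by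
    rw [hq]
    exact_mod_cast Rat.floor_intCast_div_natCast (a + b) 2
  have hceil : ⌈((a : ℚ) + b) / 2⌉ = (a + b + 1) / 2 := by
    rw [Int.ceil_eq_iff, hq]
    have h1 : ((a + b : ℤ) : ℚ) ≤ 2 * ((((a + b + 1) / 2 : ℤ)) : ℚ) := by
      exact_mod_cast (by omega : a + b ≤ 2 * ((a + b + 1) / 2))
    have h2 : 2 * ((((a + b + 1) / 2 : ℤ)) : ℚ) ≤ ((a + b : ℤ) : ℚ) + 1 := by
      exact_mod_cast (by omega : 2 * ((a + b + 1) / 2) ≤ a + b + 1)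
    constructor
    · linarith
    · linarith
  have hsum : ⌈((a : ℚ) + b) / 2⌉ + ⌊((a : ℚ) + b) / 2⌋ = a + b := by
    rw [hfloor, hceil]; omega
  have hdiff : |⌈((a : ℚ) + b) / 2⌉ - ⌊((a : ℚ) + b) / 2⌋| ≤ |a - b| := by
    rw [hfloor, hceil]
    rcases abs_cases ((a + b + 1) / 2 - (a + b) / 2) with ⟨e1, f1⟩ | ⟨e1, f1⟩ <;>
      rcases abs_cases (a - b) with ⟨e2, f2⟩ | ⟨e2, f2⟩ <;> rw [e1, e2] <;> omega
  apply aux15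
  · exact_mod_cast hsum
  · have : (|⌈((a : ℚ) + b) / 2⌉ - ⌊((a : ℚ) + b) / 2⌋| : ℝ) ≤ (|a - b| : ℝ) := by
      exact_mod_cast hdiff
    push_cast [abs_sub_comm] at this ⊢
    rw [abs_sub_comm] at this ⊢
    exact this
end
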